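/- arXiv:math/0312365 — 6 statements merged into one kernel-verified Lean document; each statement's English description precedes it below -/
import Mathlib

section
/- Let T := [T_1 ⋯ T_n] with T_i ∈ B(H) and T' := [T_1' ⋯ T_n'] with T_i' ∈ B(H') be row contractions, and let A ∈ B(H,H') be a contraction satisfying A T_i = T_i' A for all i = 1,…,n. Then for all h_1,…,h_n ∈ H one has ‖∑_{i=1}^n D_A T_i h_i‖² + ‖D_T(h_1 ⊕ ⋯ ⊕ h_n)‖² = ∑_{i=1}^n ‖D_A h_i‖² + ‖D_{T'}(A h_1 ⊕ ⋯ ⊕ A h_n)‖². Consequently, the map W sending ∑ D_A T_i h_i ⊕ D_T(⊕ h_i) to D_{T'}(⊕ A h_i) ⊕ (⊕ D_A h_i) extends to an isometry. -/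
/-!
Each defect operator `D_B` satisfies `‖D_B x‖² = ‖x‖² - ‖B x‖²`. Apply this to `D_A` at `T h`
and at each `h_i`, to `D_T` at `h` and to `D_{T'}` at `⊕ A h_i`; since `A T h = T' (⊕ A h_i)` by
the intertwining relations and `‖⊕ x_i‖² = ∑ ‖x_i‖²`, both sides equal
`‖h‖² - ‖T' (⊕ A h_i)‖²`.
-/

theorem ContinuousLinearMap.norm_sq_defect_apply
    {𝕜 E F : Type*} [RCLike 𝕜] [NormedAddCommGroup E] [InnerProductSpace 𝕜 E] [CompleteSpace E]
    [NormedAddCommGroup F] [InnerProductSpace 𝕜 F] [CompleteSpace F]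
    {B : E →L[𝕜] F} {D : E →L[𝕜] E} (hD : IsSelfAdjoint D)
    (h : D ∘L D = 1 - adjoint B ∘L B) (x : E) :
    ‖D x‖ ^ 2 = ‖x‖ ^ 2 - ‖B x‖ ^ 2 := by
  rw [D.apply_norm_sq_eq_inner_adjoint_left, hD.adjoint_eq, h,
    B.apply_norm_sq_eq_inner_adjoint_left, sub_apply, one_apply_eq_self, inner_sub_left, map_sub, inner_self_eq_norm_sq]

theorem ContinuousLinearMap.apply_sum_eq_sum_apply_of_comp_eq_comp
    {R E F ι : Type*} [Semiring R] [TopologicalSpace E] [AddCommMonoid E] [Module R E]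
    [TopologicalSpace F] [AddCommMonoid F] [Module R F] [Fintype ι]
    {S : ι → E →L[R] E} {S' : ι → F →L[R] F} {A : E →L[R] F} (hint : ∀ i, A ∘L S i = S' i ∘L A)
    (h : ι → E) :
    A (∑ i, S i (h i)) = ∑ i, S' i (A (h i)) := by
  simp only [map_sum, ← comp_apply, hint]

theorem stmt_4_general {H H' : Type*} [NormedAddCommGroup H] [InnerProductSpace ℂ H] [CompleteSpace H]
    [NormedAddCommGroup H'] [InnerProductSpace ℂ H'] [CompleteSpace H'] {n : ℕ}
    (T : Fin n → H →L[ℂ] H) (T' : Fin n → H' →L[ℂ] H')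
    (Trow : PiLp 2 (fun _ : Fin n => H) →L[ℂ] H)
    (hTrow : ∀ h : PiLp 2 (fun _ : Fin n => H), Trow h = ∑ i, T i (h i))
    (T'row : PiLp 2 (fun _ : Fin n => H') →L[ℂ] H')
    (hT'row : ∀ h : PiLp 2 (fun _ : Fin n => H'), T'row h = ∑ i, T' i (h i))
    (A : H →L[ℂ] H') (hint : ∀ i, A ∘L T i = T' i ∘L A)
    (DA : H →L[ℂ] H) (hDApos : DA.IsPositive)
    (hDA : DA ∘L DA = 1 - ContinuousLinearMap.adjoint A ∘L A)
    (DT : PiLp 2 (fun _ : Fin n => H) →L[ℂ] PiLp 2 (fun _ : Fin n => H))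
    (hDTpos : DT.IsPositive)
    (hDT : DT ∘L DT = 1 - ContinuousLinearMap.adjoint Trow ∘L Trow)
    (DT' : PiLp 2 (fun _ : Fin n => H') →L[ℂ] PiLp 2 (fun _ : Fin n => H'))
    (hDT'pos : DT'.IsPositive)
    (hDT' : DT' ∘L DT' = 1 - ContinuousLinearMap.adjoint T'row ∘L T'row) :
    ∀ h : PiLp 2 (fun _ : Fin n => H),
      ‖∑ i, DA (T i (h i))‖ ^ 2 + ‖DT h‖ ^ 2
        = (∑ i, ‖DA (h i)‖ ^ 2)
          + ‖DT' ((WithLp.equiv 2 (∀ _ : Fin n, H')).symm fun i => A (h i))‖ ^ 2 := by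
  intro h
  set Ah : PiLp 2 (fun _ : Fin n => H') := (WithLp.equiv 2 (∀ _ : Fin n, H')).symm fun i => A (h i)
  have defect_A := ContinuousLinearMap.norm_sq_defect_apply hDApos.isSelfAdjoint hDA
  have hATh : A (Trow h) = T'row Ah := by
    rw [hTrow, hT'row, A.apply_sum_eq_sum_apply_of_comp_eq_comp hint]
    rfl
  have hAh : ‖Ah‖ ^ 2 = ∑ i, ‖A (h i)‖ ^ 2 := PiLp.norm_sq_eq_of_L2 _ Ah
  rw [← map_sum, ← hTrow, defect_A, hATh,
    ContinuousLinearMap.norm_sq_defect_apply hDTpos.isSelfAdjoint hDT,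
    ContinuousLinearMap.norm_sq_defect_apply hDT'pos.isSelfAdjoint hDT',
    Finset.sum_congr rfl fun i _ => defect_A (h i), Finset.sum_sub_distrib, hAh,
    PiLp.norm_sq_eq_of_L2]
  ring

/-- For row contractions `T = [T_1 ⋯ T_n]` on `H`, `T' = [T_1' ⋯ T_n']` on `H'`
and a contraction `A : H → H'` intertwining them (`A T_i = T_i' A`), one has, for all
`h_1,…,h_n ∈ H`,
`‖∑ D_A T_i h_i‖² + ‖D_T(⊕ h_i)‖² = ∑ ‖D_A h_i‖² + ‖D_{T'}(⊕ A h_i)‖²`,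
where the defect operators are the positive square roots of `I - A*A`, `I - T*T`, `I - T'*T'`
(here hypothesized via their characterizing properties). -/
theorem stmt_4 {H H' : Type*} [NormedAddCommGroup H] [InnerProductSpace ℂ H] [CompleteSpace H]
    [NormedAddCommGroup H'] [InnerProductSpace ℂ H'] [CompleteSpace H'] {n : ℕ}
    [CompleteSpace (PiLp 2 (fun _ : Fin n => H))] [CompleteSpace (PiLp 2 (fun _ : Fin n => H'))]
    (T : Fin n → H →L[ℂ] H) (T' : Fin n → H' →L[ℂ] H')
    (Trow : PiLp 2 (fun _ : Fin n => H) →L[ℂ] H)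
    (hTrow : ∀ h : PiLp 2 (fun _ : Fin n => H), Trow h = ∑ i, T i (h i))
    (T'row : PiLp 2 (fun _ : Fin n => H') →L[ℂ] H')
    (hT'row : ∀ h : PiLp 2 (fun _ : Fin n => H'), T'row h = ∑ i, T' i (h i))
    (hT : ‖Trow‖ ≤ 1) (hT' : ‖T'row‖ ≤ 1)
    (A : H →L[ℂ] H') (hA : ‖A‖ ≤ 1) (hint : ∀ i, A ∘L T i = T' i ∘L A)
    (DA : H →L[ℂ] H) (hDApos : DA.IsPositive)
    (hDA : DA ∘L DA = 1 - ContinuousLinearMap.adjoint A ∘L A)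
    (DT : PiLp 2 (fun _ : Fin n => H) →L[ℂ] PiLp 2 (fun _ : Fin n => H))
    (hDTpos : DT.IsPositive)
    (hDT : DT ∘L DT = 1 - ContinuousLinearMap.adjoint Trow ∘L Trow)
    (DT' : PiLp 2 (fun _ : Fin n => H') →L[ℂ] PiLp 2 (fun _ : Fin n => H'))
    (hDT'pos : DT'.IsPositive)
    (hDT' : DT' ∘L DT' = 1 - ContinuousLinearMap.adjoint T'row ∘L T'row) :
    ∀ h : PiLp 2 (fun _ : Fin n => H),
      ‖∑ i, DA (T i (h i))‖ ^ 2 + ‖DT h‖ ^ 2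
        = (∑ i, ‖DA (h i)‖ ^ 2)
          + ‖DT' ((WithLp.equiv 2 (∀ _ : Fin n, H')).symm fun i => A (h i))‖ ^ 2 :=
  stmt_4_general T T' Trow hTrow T'row hT'row A hint DA hDApos hDA DT hDTpos hDT DT' hDT'pos hDT'
end

section
/- Let E be a Hilbert space and let T ∈ B(F²(Hₙ) ⊗ E) be a positive multi-Toeplitz operator. Then there exist isometries V_1,…,V_n with pairwise orthogonal ranges on the closure Y of T^{1/2}(F²(Hₙ) ⊗ E) such that V_i T^{1/2} = T^{1/2}(S_i ⊗ I_E) for i = 1,…,n. -/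
open scoped InnerProductSpace

/-! Since `T = R²`, the multi-Toeplitz relations say `⟪R S_i x, R S_j y⟫ = δ_ij ⟪R x, R y⟫`.
Hence `R x ↦ R (S_i x)` is a well-defined isometry on the range of `R`, the ranges of these maps
are mutually orthogonal, and all of this survives the extension by continuity to the closure. -/

namespace LinearMap

section CodRestrictClosure

variable {R M M₂ : Type*} [Semiring R] [AddCommMonoid M] [Module R M]
  [AddCommMonoid M₂] [Module R M₂] [TopologicalSpace M₂] [ContinuousAdd M₂]
  [ContinuousConstSMul R M₂]

def toRangeClosure (f : M →ₗ[R] M₂) : M →ₗ[R] (range f).topologicalClosure :=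
  f.codRestrict _ fun x ↦ (range f).le_topologicalClosure (mem_range_self f x)

theorem denseRange_toRangeClosure (f : M →ₗ[R] M₂) : DenseRange f.toRangeClosure := by
  rw [DenseRange, Subtype.dense_iff, ← Set.range_comp]
  exact subset_rfl

end CodRestrictClosure

section ExtendOfNorm

variable {𝕜 E Eₗ F : Type*} [NormedField 𝕜] [AddCommGroup E] [Module 𝕜 E]
  [SeminormedAddCommGroup Eₗ] [NormedSpace 𝕜 Eₗ]

theorem extendOfNorm_apply_eq_of_norm_eq [NormedAddCommGroup F] [NormedSpace 𝕜 F] [CompleteSpace F]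
    {f : E →ₗ[𝕜] F} {e : E →ₗ[𝕜] Eₗ} (h_dense : DenseRange e) (h_norm : ∀ x, ‖f x‖ = ‖e x‖)
    (x : E) : f.extendOfNorm e (e x) = f x :=
  extendOfNorm_eq h_dense ⟨1, fun x ↦ by simp [h_norm]⟩ x

theorem norm_extendOfNorm_apply_of_norm_eq [NormedAddCommGroup F] [NormedSpace 𝕜 F]
    [CompleteSpace F] {f : E →ₗ[𝕜] F} {e : E →ₗ[𝕜] Eₗ} (h_dense : DenseRange e)
    (h_norm : ∀ x, ‖f x‖ = ‖e x‖) (y : Eₗ) : ‖f.extendOfNorm e y‖ = ‖y‖ := by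
  refine h_dense.induction ?_ (isClosed_eq (by fun_prop) continuous_norm) y
  rintro _ ⟨x, rfl⟩
  rw [extendOfNorm_apply_eq_of_norm_eq h_dense h_norm, h_norm]

end ExtendOfNorm

theorem inner_extendOfNorm_eq_zero {𝕜 E Eₗ F : Type*} [RCLike 𝕜] [AddCommGroup E] [Module 𝕜 E]
    [SeminormedAddCommGroup Eₗ] [NormedSpace 𝕜 Eₗ] [NormedAddCommGroup F] [InnerProductSpace 𝕜 F]
    [CompleteSpace F] {f g : E →ₗ[𝕜] F} {e : E →ₗ[𝕜] Eₗ} (h_dense : DenseRange e)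
    (hf : ∀ x, ‖f x‖ = ‖e x‖) (hg : ∀ x, ‖g x‖ = ‖e x‖) (h : ∀ x x', ⟪f x, g x'⟫_𝕜 = 0)
    (y y' : Eₗ) : ⟪f.extendOfNorm e y, g.extendOfNorm e y'⟫_𝕜 = 0 := by
  refine h_dense.induction_on₂ (isClosed_eq (by fun_prop) continuous_const) (fun x x' ↦ ?_) y y'
  rw [extendOfNorm_apply_eq_of_norm_eq h_dense hf, extendOfNorm_apply_eq_of_norm_eq h_dense hg, h]

end LinearMap

namespace ContinuousLinearMap

variable {𝕜 E ι : Type*} [RCLike 𝕜] [NormedAddCommGroup E] [InnerProductSpace 𝕜 E]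
  [CompleteSpace E] [DecidableEq ι]

def IsMultiToeplitz (S : ι → E →L[𝕜] E) (T : E →L[𝕜] E) : Prop :=
  ∀ i j, adjoint (S i) ∘L T ∘L S j = if i = j then T else 0

variable {S : ι → E →L[𝕜] E} {R : E →L[𝕜] E}

theorem IsMultiToeplitz.inner_apply_apply (hR : IsSelfAdjoint R) (hT : IsMultiToeplitz S (R ∘L R))
    (i j : ι) (x y : E) : ⟪R (S i x), R (S j y)⟫_𝕜 = if i = j then ⟪R x, R y⟫_𝕜 else 0 := by
  calc ⟪R (S i x), R (S j y)⟫_𝕜 = ⟪S i x, R (R (S j y))⟫_𝕜 := hR.isSymmetric _ _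
    _ = ⟪x, (adjoint (S i) ∘L (R ∘L R) ∘L S j) y⟫_𝕜 := (adjoint_inner_right _ _ _).symm
    _ = if i = j then ⟪R x, R y⟫_𝕜 else 0 := by
      rw [hT i j]
      split_ifs
      exacts [(hR.isSymmetric _ _).symm, inner_zero_right _]

theorem IsMultiToeplitz.norm_apply_apply (hR : IsSelfAdjoint R) (hT : IsMultiToeplitz S (R ∘L R))
    (i : ι) (x : E) : ‖R (S i x)‖ = ‖R x‖ := by
  rw [norm_eq_sqrt_re_inner (𝕜 := 𝕜), norm_eq_sqrt_re_inner (𝕜 := 𝕜), hT.inner_apply_apply hR,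
    if_pos rfl]

end ContinuousLinearMap

open ContinuousLinearMap LinearMap in
theorem stmt_7_general {F : Type*} [NormedAddCommGroup F] [InnerProductSpace ℂ F] [CompleteSpace F]
    {n : ℕ} (S : Fin n → F →L[ℂ] F)
    (T R : F →L[ℂ] F) (hRpos : R.IsPositive) (hRsq : R ∘L R = T)
    (hT : ∀ i j, ContinuousLinearMap.adjoint (S i) ∘L T ∘L S j
        = if i = j then T else 0) :
    ∃ V : Fin n →
        ((LinearMap.range (R : F →ₗ[ℂ] F)).topologicalClosure →L[ℂ] (LinearMap.range (R : F →ₗ[ℂ] F)).topologicalClosure),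
      (∀ i y, ‖V i y‖ = ‖y‖) ∧
      (∀ i j, i ≠ j → ∀ x y, ⟪V i x, V j y⟫_ℂ = (0 : ℂ)) ∧
      (∀ i (x : F),
        ((V i ⟨R x, Submodule.le_topologicalClosure _ (LinearMap.mem_range_self (R : F →ₗ[ℂ] F) x)⟩ :
            (LinearMap.range (R : F →ₗ[ℂ] F)).topologicalClosure) : F) = R (S i x)) := by
  have hR : IsSelfAdjoint R := hRpos.isSelfAdjoint
  have hToeplitz : IsMultiToeplitz S (R ∘L R) := hRsq ▸ hT
  let e := (R : F →ₗ[ℂ] F).toRangeClosure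
  have he : DenseRange e := denseRange_toRangeClosure _
  let f i := e ∘ₗ (S i : F →ₗ[ℂ] F)
  have hf : ∀ i x, ‖f i x‖ = ‖e x‖ := hToeplitz.norm_apply_apply hR
  refine ⟨fun i ↦ (f i).extendOfNorm e, fun i ↦ norm_extendOfNorm_apply_of_norm_eq he (hf i),
    fun i j hij ↦ inner_extendOfNorm_eq_zero he (hf i) (hf j) fun x y ↦ ?_,
    fun i x ↦ congrArg Subtype.val (extendOfNorm_apply_eq_of_norm_eq he (hf i) x)⟩
  exact (hToeplitz.inner_apply_apply hR i j x y).trans (if_neg hij)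

/-- Let `S_1,…,S_n` be isometries with orthogonal ranges (modelling the
creation operators `S_i ⊗ I_E` on `F²(Hₙ) ⊗ E`) and let `T ≥ 0` be a multi-Toeplitz
operator (`(S_i ⊗ I)* T (S_j ⊗ I) = δ_{ij} T`).  Then, with `R := T^{1/2}` (the positive
square root), there exist isometries `V_1,…,V_n` with pairwise orthogonal ranges on the
closure `Y` of the range of `T^{1/2}` satisfying `V_i T^{1/2} = T^{1/2} (S_i ⊗ I)`. -/
theorem stmt_7 {F : Type*} [NormedAddCommGroup F] [InnerProductSpace ℂ F] [CompleteSpace F]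
    {n : ℕ} (S : Fin n → F →L[ℂ] F)
    (hSiso : ∀ i (x : F), ‖S i x‖ = ‖x‖)
    (hSorth : ∀ i j, i ≠ j → ContinuousLinearMap.adjoint (S i) ∘L S j = 0)
    (T R : F →L[ℂ] F) (hTpos : T.IsPositive) (hRpos : R.IsPositive) (hRsq : R ∘L R = T)
    (hT : ∀ i j, ContinuousLinearMap.adjoint (S i) ∘L T ∘L S j
        = if i = j then T else 0) :
    ∃ V : Fin n →
        ((LinearMap.range (R : F →ₗ[ℂ] F)).topologicalClosure →L[ℂ] (LinearMap.range (R : F →ₗ[ℂ] F)).topologicalClosure),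
      (∀ i y, ‖V i y‖ = ‖y‖) ∧
      (∀ i j, i ≠ j → ∀ x y, ⟪V i x, V j y⟫_ℂ = (0 : ℂ)) ∧
      (∀ i (x : F),
        ((V i ⟨R x, Submodule.le_topologicalClosure _ (LinearMap.mem_range_self (R : F →ₗ[ℂ] F) x)⟩ :
            (LinearMap.range (R : F →ₗ[ℂ] F)).topologicalClosure) : F) = R (S i x)) :=
  stmt_7_general S T R hRpos hRsq hT
end

section
/- Let E be a Hilbert space and M_θ ∈ Rₙ^∞ ⊗̄ B(E) a nonzero multi-analytic operator with Fourier coefficients (θ_α)_{α ∈ 𝔽ₙ⁺}, and suppose θ(0) := θ_{g_0} ≠ 0. Then for every h ∈ E, inf { ⟨M_θ* M_θ (h − p), h − p⟩ : p a polynomial in F²(Hₙ) ⊗ E with p(0) = 0 } ≥ ⟨θ(0)* θ(0) h, h⟩, where h is identified with 1 ⊗ h. -/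
open scoped InnerProductSpace

/-!
The wandering subspace `J E` lies in the kernel of every `S i†`, so `J† S i = 0`. Since `M`
commutes with the `S i`, it maps every word `S_w (J h)` with `w ≠ []` into the range of some
`S i`, hence into `ker J†`; so `J† M (J h - p) = J† M J h = θ(0) h` for any polynomial `p` with
`p(0) = 0`, and the bound follows because `J†` is a contraction.
-/

namespace ContinuousLinearMap

variable {𝕜 E F G : Type*} [RCLike 𝕜]
  [NormedAddCommGroup E] [InnerProductSpace 𝕜 E] [CompleteSpace E]
  [NormedAddCommGroup F] [InnerProductSpace 𝕜 F] [CompleteSpace F]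
  [NormedAddCommGroup G] [InnerProductSpace 𝕜 G] [CompleteSpace G]

theorem adjoint_comp_eq_zero_of_range_le_ker {A : E →L[𝕜] G} {B : F →L[𝕜] G}
    (h : LinearMap.range (A : E →ₗ[𝕜] G) ≤ LinearMap.ker (adjoint B : G →ₗ[𝕜] F)) :
    adjoint A ∘L B = 0 := by
  have hBA : adjoint B ∘L A = 0 := coe_injective (LinearMap.range_le_ker_iff.mp h)
  rw [← adjoint_adjoint B, ← adjoint_comp, hBA, map_zero]

theorem norm_adjoint_apply_le_of_isometry {J : E →L[𝕜] F} (hJ : ∀ x, ‖J x‖ = ‖x‖) (y : F) :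
    ‖adjoint J y‖ ≤ ‖y‖ := by
  have hJnorm : ‖adjoint J‖ ≤ 1 := by
    rw [adjoint.norm_map]
    exact opNorm_le_bound _ zero_le_one fun x => by rw [hJ, one_mul]
  simpa using le_of_opNorm_le _ hJnorm y

end ContinuousLinearMap

theorem span_nonempty_words_le_ker {𝕜 E F G : Type*} [NontriviallyNormedField 𝕜]
    [NormedAddCommGroup F] [NormedSpace 𝕜 F]
    [NormedAddCommGroup G] [NormedSpace 𝕜 G] {ι : Type*}
    {S : ι → F →L[𝕜] F} {Sw : List ι → F →L[𝕜] F} (hSw_cons : ∀ i w, Sw (i :: w) = S i ∘L Sw w)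
    {M : F →L[𝕜] F} (hM : ∀ i, M ∘L S i = S i ∘L M)
    {T : F →L[𝕜] G} (hTS : ∀ i, T ∘L S i = 0) (V : E → F) :
    Submodule.span 𝕜 (⋃ w : List ι, ⋃ (_ : w ≠ []), Set.range fun h : E => Sw w (V h))
      ≤ LinearMap.ker (T ∘L M : F →ₗ[𝕜] G) := by
  have hTMS : ∀ i x, T (M (S i x)) = 0 := fun i x => by
    rw [← ContinuousLinearMap.comp_apply M, hM, ContinuousLinearMap.comp_apply,
      ← ContinuousLinearMap.comp_apply T, hTS, zero_apply]
  refine Submodule.span_le.mpr (Set.iUnion_subset fun w => Set.iUnion_subset fun hw => ?_)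
  rintro _ ⟨h, rfl⟩
  obtain ⟨i, w, rfl⟩ := List.exists_cons_of_ne_nil hw
  change T (M (Sw (i :: w) (V h))) = 0
  rw [hSw_cons]
  exact hTMS i (Sw w (V h))

theorem stmt_10_general {F E : Type*}
    [NormedAddCommGroup F] [InnerProductSpace ℂ F] [CompleteSpace F]
    [NormedAddCommGroup E] [InnerProductSpace ℂ E] [CompleteSpace E]
    {n : ℕ} (S : Fin n → F →L[ℂ] F)
    (Sw : List (Fin n) → F →L[ℂ] F)
    (hSw_cons : ∀ i w, Sw (i :: w) = S i ∘L Sw w)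
    (J : E →L[ℂ] F) (hJiso : ∀ h, ‖J h‖ = ‖h‖)
    (hJwand : LinearMap.range (J : E →ₗ[ℂ] F)
        = ⨅ i, LinearMap.ker (ContinuousLinearMap.adjoint (S i) : F →ₗ[ℂ] F))
    (M : F →L[ℂ] F) (hM : ∀ i, M ∘L S i = S i ∘L M) :
    ∀ h : E, ∀ p ∈ Submodule.span ℂ
        (⋃ w : List (Fin n), ⋃ (_ : w ≠ []), Set.range fun h : E => Sw w (J h)),
      ‖(ContinuousLinearMap.adjoint J ∘L M ∘L J) h‖ ^ 2 ≤ ‖M (J h - p)‖ ^ 2 := by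
  intro h p hp
  have hJS : ∀ i, ContinuousLinearMap.adjoint J ∘L S i = 0 := fun i =>
    ContinuousLinearMap.adjoint_comp_eq_zero_of_range_le_ker (hJwand ▸ iInf_le _ i)
  have hMp : ContinuousLinearMap.adjoint J (M p) = 0 :=
    span_nonempty_words_le_ker hSw_cons hM hJS J hp
  have hθ : (ContinuousLinearMap.adjoint J ∘L M ∘L J) h
      = ContinuousLinearMap.adjoint J (M (J h - p)) := by
    simp [map_sub, hMp]
  gcongr
  exact hθ ▸ ContinuousLinearMap.norm_adjoint_apply_le_of_isometry hJiso _

/-- In the Fock model `F ≅ F²(Hₙ) ⊗ E`, let `M` be a nonzero multi-analytic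
operator whose zeroth Fourier coefficient `θ(0) = J* M J` is nonzero.  Then for every
`h ∈ E` and every polynomial `p` with `p(0) = 0`,
`⟨M*M (h − p), h − p⟩ ≥ ⟨θ(0)*θ(0) h, h⟩`; i.e. the Szegő-type infimum is bounded below
by `⟨θ(0)*θ(0)h, h⟩`. -/
theorem stmt_10 {F E : Type*}
    [NormedAddCommGroup F] [InnerProductSpace ℂ F] [CompleteSpace F]
    [NormedAddCommGroup E] [InnerProductSpace ℂ E] [CompleteSpace E]
    {n : ℕ} (S : Fin n → F →L[ℂ] F)
    (hSiso : ∀ i (x : F), ‖S i x‖ = ‖x‖)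
    (hSorth : ∀ i j, i ≠ j → ContinuousLinearMap.adjoint (S i) ∘L S j = 0)
    (Sw : List (Fin n) → F →L[ℂ] F) (hSw_nil : Sw [] = 1)
    (hSw_cons : ∀ i w, Sw (i :: w) = S i ∘L Sw w)
    (J : E →L[ℂ] F) (hJiso : ∀ h, ‖J h‖ = ‖h‖)
    (hJwand : LinearMap.range (J : E →ₗ[ℂ] F)
        = ⨅ i, LinearMap.ker (ContinuousLinearMap.adjoint (S i) : F →ₗ[ℂ] F))
    (hJspan : (Submodule.span ℂ
        (⋃ w : List (Fin n), Set.range fun h : E => Sw w (J h))).topologicalClosure = ⊤)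
    (M : F →L[ℂ] F) (hM : ∀ i, M ∘L S i = S i ∘L M) (hM0 : M ≠ 0)
    (hθ0 : (ContinuousLinearMap.adjoint J ∘L M ∘L J : E →L[ℂ] E) ≠ 0) :
    ∀ h : E, ∀ p ∈ Submodule.span ℂ
        (⋃ w : List (Fin n), ⋃ (_ : w ≠ []), Set.range fun h : E => Sw w (J h)),
      ‖(ContinuousLinearMap.adjoint J ∘L M ∘L J) h‖ ^ 2 ≤ ‖M (J h - p)‖ ^ 2 :=
  stmt_10_general S Sw hSw_cons J hJiso hJwand M hM
end

section
/- Let M_θ ∈ Rₙ^∞ ⊗̄ B(E) be a multi-analytic operator with ‖M_θ‖ ≤ 1, and define Δ(M_θ) ∈ B(E) by ⟨Δ(M_θ)x, x⟩ := inf { ⟨(I − M_θ*M_θ)(x − p), x − p⟩ : p ∈ F²(Hₙ) ⊗ E, p(0) = 0 }. If Δ(M_θ) = 0, then M_θ is an extreme point of the closed unit ball of Rₙ^∞ ⊗̄ B(E). -/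
/-!
Put `M = (X + Y)/2` and `D = (X - Y)/2`; `D` commutes with the shifts. The parallelogram law
gives `‖D v‖² ≤ ⟨(I - M*M) v, v⟩`, so `Δ(M) = 0` places `D (1 ⊗ x)` in the closure of `D`
applied to the polynomials without constant term, that is, in the closed span of the vectors
`S_i S_w D (1 ⊗ h)`. Since the `S_i` form a row isometry and `1 ⊗ E` is wandering, induction on
the word `w` (peeling one letter off both sides) gives `⟨S_w' D (1 ⊗ x), S_w (1 ⊗ y)⟩ = 0`.
Thus `⟨D g, g'⟩ = 0` on a total set, and `D = 0`.
-/

open scoped InnerProductSpace InnerProduct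

section Midpoint

variable {𝕜 F : Type*} [RCLike 𝕜] [NormedAddCommGroup F] [InnerProductSpace 𝕜 F] [CompleteSpace F]

theorem re_inner_one_sub_adjoint_comp_self_apply (M : F →L[𝕜] F) (v : F) :
    RCLike.re ⟪((1 : F →L[𝕜] F) - M† ∘L M) v, v⟫_𝕜 = ‖v‖ ^ 2 - ‖M v‖ ^ 2 := by
  rw [sub_apply, inner_sub_left, map_sub,
    ← M.apply_norm_sq_eq_inner_adjoint_left, one_apply_eq_self,
    inner_self_eq_norm_sq]

/-- The parallelogram law for `M v ± D v = X v, Y v`, where `M` and `D` are the half sum and the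
half difference of `X` and `Y`. -/
theorem norm_half_sub_apply_sq_le {X Y : F →L[𝕜] F} (hX : ‖X‖ ≤ 1) (hY : ‖Y‖ ≤ 1) (v : F) :
    ‖((2 : 𝕜)⁻¹ • (X - Y)) v‖ ^ 2 ≤
      RCLike.re ⟪((1 : F →L[𝕜] F) - ((2 : 𝕜)⁻¹ • (X + Y))† ∘L ((2 : 𝕜)⁻¹ • (X + Y))) v, v⟫_𝕜 := by
  set M : F →L[𝕜] F := (2 : 𝕜)⁻¹ • (X + Y)
  set D : F →L[𝕜] F := (2 : 𝕜)⁻¹ • (X - Y)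
  have hMD₁ : M v + D v = X v := by
    rw [← add_apply]; congr 1; simp only [M, D]; module
  have hMD₂ : M v - D v = Y v := by
    rw [← sub_apply]; congr 1; simp only [M, D]; module
  have hXv : ‖X v‖ ≤ ‖v‖ := (X.le_of_opNorm_le hX v).trans_eq (one_mul _)
  have hYv : ‖Y v‖ ≤ ‖v‖ := (Y.le_of_opNorm_le hY v).trans_eq (one_mul _)
  have hpar := parallelogram_law_with_norm 𝕜 (M v) (D v)
  rw [hMD₁, hMD₂] at hpar
  rw [re_inner_one_sub_adjoint_comp_self_apply]
  nlinarith [norm_nonneg (X v), norm_nonneg (Y v)]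

end Midpoint

theorem apply_mem_topologicalClosure_map {𝕜 F : Type*} [RCLike 𝕜] [NormedAddCommGroup F]
    [NormedSpace 𝕜 F] (T : F →L[𝕜] F) {K : Submodule 𝕜 F} {v : F}
    (h : ∀ ε > 0, ∃ p ∈ K, ‖T (v - p)‖ < ε) :
    T v ∈ (K.map (T : F →ₗ[𝕜] F)).topologicalClosure := by
  refine Metric.mem_closure_iff.2 fun ε hε => ?_
  obtain ⟨p, hp, hlt⟩ := h ε hε
  exact ⟨T p, Submodule.mem_map_of_mem hp, by rwa [dist_eq_norm, ← map_sub]⟩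

theorem ContinuousLinearMap.eq_zero_of_forall_inner_eq_zero_of_dense {𝕜 F : Type*} [RCLike 𝕜]
    [NormedAddCommGroup F] [InnerProductSpace 𝕜 F] [CompleteSpace F] {G : Set F}
    (hG : (Submodule.span 𝕜 G).topologicalClosure = ⊤) {T : F →L[𝕜] F}
    (hT : ∀ g ∈ G, ∀ g' ∈ G, ⟪T g, g'⟫_𝕜 = 0) : T = 0 := by
  have hTG : ∀ g ∈ G, T g = 0 := fun g hg => by
    have hmem : T g ∈ (Submodule.span 𝕜 G)ᗮ :=
      Submodule.isOrtho_span.2 (by rintro _ rfl; exact hT g hg)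
        (Submodule.mem_span_singleton_self _)
    rwa [Submodule.topologicalClosure_eq_top_iff.1 hG, Submodule.mem_bot] at hmem
  exact ContinuousLinearMap.ext_on (Submodule.dense_iff_topologicalClosure_eq_top.2 hG) hTG

section Words

variable {𝕜 F E : Type*} [RCLike 𝕜] [NormedAddCommGroup F] [InnerProductSpace 𝕜 F]
  {n : ℕ} {S : Fin n → F →L[𝕜] F} {Sw : List (Fin n) → F →L[𝕜] F}

theorem apply_word_apply_of_comp_eq (hSw_nil : Sw [] = 1)
    (hSw_cons : ∀ i w, Sw (i :: w) = S i ∘L Sw w) {T : F →L[𝕜] F}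
    (hT : ∀ i, T ∘L S i = S i ∘L T) (w : List (Fin n)) (v : F) :
    T (Sw w v) = Sw w (T v) := by
  induction w with
  | nil => simp [hSw_nil]
  | cons i w ih =>
    rw [hSw_cons, ContinuousLinearMap.comp_apply, ContinuousLinearMap.comp_apply, ← ih]
    exact DFunLike.congr_fun (hT i) (Sw w v)

theorem inner_eq_zero_of_mem_topologicalClosure_map_span (hSw_nil : Sw [] = 1)
    (hSw_cons : ∀ i w, Sw (i :: w) = S i ∘L Sw w) {T : F →L[𝕜] F}
    (hT : ∀ i, T ∘L S i = S i ∘L T) {J : E → F} {v u : F}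
    (hv : v ∈ ((Submodule.span 𝕜 (⋃ w : List (Fin n), ⋃ (_ : w ≠ []),
      Set.range fun h : E => Sw w (J h))).map (T : F →ₗ[𝕜] F)).topologicalClosure)
    (hu : ∀ i w h, ⟪S i (Sw w (T (J h))), u⟫_𝕜 = 0) : ⟪v, u⟫_𝕜 = 0 := by
  have hle : (Submodule.span 𝕜 (⋃ w : List (Fin n), ⋃ (_ : w ≠ []),
      Set.range fun h : E => Sw w (J h))).map (T : F →ₗ[𝕜] F) ≤ (𝕜 ∙ u)ᗮ := by
    rw [Submodule.map_span, Submodule.span_le]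
    rintro _ ⟨_, hmem, rfl⟩
    simp only [Set.mem_iUnion, Set.mem_range] at hmem
    obtain ⟨_ | ⟨i, w⟩, hw, h, rfl⟩ := hmem
    · exact absurd rfl hw
    · rw [SetLike.mem_coe, Submodule.mem_orthogonal_singleton_iff_inner_left,
        ContinuousLinearMap.coe_coe, apply_word_apply_of_comp_eq hSw_nil hSw_cons hT, hSw_cons,
        ContinuousLinearMap.comp_apply]
      exact hu i w h
  exact Submodule.mem_orthogonal_singleton_iff_inner_left.1
    (Submodule.topologicalClosure_minimal _ hle (Submodule.isClosed_orthogonal _) hv)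

variable [CompleteSpace F]

theorem inner_apply_apply_eq_ite (hSiso : ∀ i (x : F), ‖S i x‖ = ‖x‖)
    (hSorth : ∀ i j, i ≠ j → (S i)† ∘L S j = 0) (i j : Fin n) (u v : F) :
    ⟪S i u, S j v⟫_𝕜 = if i = j then ⟪u, v⟫_𝕜 else 0 := by
  split_ifs with hij
  · subst hij
    exact LinearIsometry.inner_map_map ⟨(S i : F →ₗ[𝕜] F), hSiso i⟩ u v
  · rw [← ContinuousLinearMap.adjoint_inner_right, ← ContinuousLinearMap.comp_apply,
      hSorth i j hij, zero_apply, inner_zero_right]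

theorem inner_apply_eq_zero_of_range_le {E : Type*} [NormedAddCommGroup E] [NormedSpace 𝕜 E]
    {J : E →L[𝕜] F}
    (hJ : LinearMap.range (J : E →ₗ[𝕜] F) ≤ ⨅ i, LinearMap.ker ((S i)† : F →ₗ[𝕜] F))
    (i : Fin n) (z : F) (h : E) : ⟪S i z, J h⟫_𝕜 = 0 := by
  have hker : ((S i)†) (J h) = 0 := (Submodule.mem_iInf _).1 (hJ ⟨h, rfl⟩) i
  rw [← ContinuousLinearMap.adjoint_inner_right, hker, inner_zero_right]

/-- Induction on `w`: a leading letter is peeled off both sides by the row isometry, and for the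
empty word `hg` or `hf` applies. -/
theorem inner_word_apply_word_apply_eq_zero (hSw_nil : Sw [] = 1)
    (hSw_cons : ∀ i w, Sw (i :: w) = S i ∘L Sw w) (hSiso : ∀ i (x : F), ‖S i x‖ = ‖x‖)
    (hSorth : ∀ i j, i ≠ j → (S i)† ∘L S j = 0) {f g : E → F}
    (hg : ∀ i z y, ⟪S i z, g y⟫_𝕜 = 0)
    (hf : ∀ x u, (∀ i w h, ⟪S i (Sw w (f h)), u⟫_𝕜 = 0) → ⟪f x, u⟫_𝕜 = 0)
    (w w' : List (Fin n)) (x y : E) : ⟪Sw w' (f x), Sw w (g y)⟫_𝕜 = 0 := by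
  induction w generalizing w' x with
  | nil =>
    cases w' with
    | nil => rw [hSw_nil, one_apply_eq_self]; exact hf x _ fun i w h => hg i _ y
    | cons j w' => rw [hSw_nil, hSw_cons, one_apply_eq_self]; exact hg j _ y
  | cons i w ih =>
    have hpeel : ∀ j w' x, ⟪S j (Sw w' (f x)), S i (Sw w (g y))⟫_𝕜 = 0 := fun j w' x => by
      rw [inner_apply_apply_eq_ite hSiso hSorth]
      split_ifs
      exacts [ih w' x, rfl]
    rw [hSw_cons, ContinuousLinearMap.comp_apply]
    cases w' with
    | nil => rw [hSw_nil, one_apply_eq_self]; exact hf x _ hpeel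
    | cons j w' => rw [hSw_cons, ContinuousLinearMap.comp_apply]; exact hpeel j w' x

end Words

theorem stmt_12_general {F E : Type*}
    [NormedAddCommGroup F] [InnerProductSpace ℂ F] [CompleteSpace F]
    [NormedAddCommGroup E] [InnerProductSpace ℂ E]
    {n : ℕ} (S : Fin n → F →L[ℂ] F)
    (hSiso : ∀ i (x : F), ‖S i x‖ = ‖x‖)
    (hSorth : ∀ i j, i ≠ j → ContinuousLinearMap.adjoint (S i) ∘L S j = 0)
    (Sw : List (Fin n) → F →L[ℂ] F) (hSw_nil : Sw [] = 1)
    (hSw_cons : ∀ i w, Sw (i :: w) = S i ∘L Sw w)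
    (J : E →L[ℂ] F)
    (hJwand : LinearMap.range (J : E →ₗ[ℂ] F)
        = ⨅ i, LinearMap.ker (ContinuousLinearMap.adjoint (S i) : F →ₗ[ℂ] F))
    (hJspan : (Submodule.span ℂ
        (⋃ w : List (Fin n), Set.range fun h : E => Sw w (J h))).topologicalClosure = ⊤)
    (M : F →L[ℂ] F)
    (hΔ0 : ∀ x : E, ∀ ε : ℝ, 0 < ε → ∃ p ∈ Submodule.span ℂ
        (⋃ w : List (Fin n), ⋃ (_ : w ≠ []), Set.range fun h : E => Sw w (J h)),
      (⟪((1 : F →L[ℂ] F) - ContinuousLinearMap.adjoint M ∘L M) (J x - p),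
          J x - p⟫_ℂ).re < ε) :
    ∀ X Y : F →L[ℂ] F, (∀ i, X ∘L S i = S i ∘L X) → (∀ i, Y ∘L S i = S i ∘L Y) →
      ‖X‖ ≤ 1 → ‖Y‖ ≤ 1 → M = (2 : ℂ)⁻¹ • (X + Y) → X = Y := by
  rintro X Y hXS hYS hX hY rfl
  set D : F →L[ℂ] F := (2 : ℂ)⁻¹ • (X - Y) with hD
  have hDS : ∀ i, D ∘L S i = S i ∘L D := fun i => by
    simp only [D, ContinuousLinearMap.smul_comp, ContinuousLinearMap.comp_smul,
      ContinuousLinearMap.sub_comp, ContinuousLinearMap.comp_sub, hXS i, hYS i]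
  have hDJ : ∀ x, D (J x) ∈ ((Submodule.span ℂ (⋃ w : List (Fin n), ⋃ (_ : w ≠ []),
      Set.range fun h : E => Sw w (J h))).map (D : F →ₗ[ℂ] F)).topologicalClosure := by
    refine fun x => apply_mem_topologicalClosure_map D fun ε hε => ?_
    obtain ⟨p, hp, hlt⟩ := hΔ0 x (ε ^ 2) (by positivity)
    exact ⟨p, hp,
      lt_of_pow_lt_pow_left₀ 2 hε.le ((norm_half_sub_apply_sq_le hX hY _).trans_lt hlt)⟩
  have horth := inner_word_apply_word_apply_eq_zero hSw_nil hSw_cons hSiso hSorth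
    (inner_apply_eq_zero_of_range_le hJwand.le) (f := fun x => D (J x))
    fun x _ hu => inner_eq_zero_of_mem_topologicalClosure_map_span hSw_nil hSw_cons hDS (hDJ x) hu
  have hD0 : D = 0 := by
    refine ContinuousLinearMap.eq_zero_of_forall_inner_eq_zero_of_dense hJspan ?_
    simp only [Set.mem_iUnion, Set.mem_range]
    rintro _ ⟨w', x, rfl⟩ _ ⟨w, y, rfl⟩
    rw [apply_word_apply_of_comp_eq hSw_nil hSw_cons hDS]
    exact horth w w' x y
  rwa [hD, smul_eq_zero_iff_right (inv_ne_zero two_ne_zero), sub_eq_zero] at hD0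

/-- In the Fock model `F ≅ F²(Hₙ) ⊗ E`, let `M` be a multi-analytic
contraction with `Δ(M) = 0` (the Szegő infimum
`inf { ⟨(I − M*M)(x − p), x − p⟩ : p with p(0) = 0 }` vanishes for every `x ∈ E`).
Then `M` is an extreme point of the unit ball of the multi-analytic operators
(no two distinct multi-analytic contractions average to `M`). -/
theorem stmt_12 {F E : Type*}
    [NormedAddCommGroup F] [InnerProductSpace ℂ F] [CompleteSpace F]
    [NormedAddCommGroup E] [InnerProductSpace ℂ E] [CompleteSpace E]
    {n : ℕ} (S : Fin n → F →L[ℂ] F)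
    (hSiso : ∀ i (x : F), ‖S i x‖ = ‖x‖)
    (hSorth : ∀ i j, i ≠ j → ContinuousLinearMap.adjoint (S i) ∘L S j = 0)
    (Sw : List (Fin n) → F →L[ℂ] F) (hSw_nil : Sw [] = 1)
    (hSw_cons : ∀ i w, Sw (i :: w) = S i ∘L Sw w)
    (J : E →L[ℂ] F) (hJiso : ∀ h, ‖J h‖ = ‖h‖)
    (hJwand : LinearMap.range (J : E →ₗ[ℂ] F)
        = ⨅ i, LinearMap.ker (ContinuousLinearMap.adjoint (S i) : F →ₗ[ℂ] F))
    (hJspan : (Submodule.span ℂ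
        (⋃ w : List (Fin n), Set.range fun h : E => Sw w (J h))).topologicalClosure = ⊤)
    (M : F →L[ℂ] F) (hM : ∀ i, M ∘L S i = S i ∘L M) (hMnorm : ‖M‖ ≤ 1)
    (hΔ0 : ∀ x : E, ∀ ε : ℝ, 0 < ε → ∃ p ∈ Submodule.span ℂ
        (⋃ w : List (Fin n), ⋃ (_ : w ≠ []), Set.range fun h : E => Sw w (J h)),
      (⟪((1 : F →L[ℂ] F) - ContinuousLinearMap.adjoint M ∘L M) (J x - p),
          J x - p⟫_ℂ).re < ε) :
    ∀ X Y : F →L[ℂ] F, (∀ i, X ∘L S i = S i ∘L X) → (∀ i, Y ∘L S i = S i ∘L Y) →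
      ‖X‖ ≤ 1 → ‖Y‖ ≤ 1 → M = (2 : ℂ)⁻¹ • (X + Y) → X = Y :=
  stmt_12_general S hSiso hSorth Sw hSw_nil hSw_cons J hJwand hJspan M hΔ0
end

section
/- Let T' := [T_1' ⋯ T_n'] be a row contraction on H' and let A : F²(Hₙ) → H' be a contraction with ‖A‖ = 1 that attains its norm and satisfies A S_i = T_i' A for i = 1,…,n. Then M := D_A-range complement, namely M := closure(D_A F²(Hₙ)) ⊖ ⋁_{i=1}^n D_A S_i F²(Hₙ), is {0}. Moreover, A attains its norm at some vector f ∈ F²(Hₙ) with f(0) ≠ 0. -/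
/-!
For a contraction `A` the vectors where `A` is isometric form `ker D_A`, and there `A* A g = g`.
If moreover `g ⊥ Ω`, then `‖g‖² = ∑ ‖S_i* g‖²` and `S_i* g = A* T_i'* A g`, so the row contraction
gives `∑ ‖S_i* g‖² ≤ ∑ ‖T_i'* A g‖² ≤ ‖A g‖² = ‖g‖²`. Termwise equality makes `A*` isometric at
`T_i'* A g`, whence each `S_i* g` lies in `ker D_A` again. Were `ker D_A ⊥ Ω`, it would be invariant under every word
`S_w*`, and a norm-attaining vector would be orthogonal to the dense set of the `S_w Ω`; hence some
`f ∈ ker D_A` has `f(0) ≠ 0`. For `M = {0}`: `y ⊥ D_A S_i F` for all `i` means `S_i* D_A y = 0`, so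
`D_A y ∈ ℂ Ω`; pairing with `f` gives `D_A y = 0`, and `ker D_A` meets `closure (range D_A)` only
in `0`.
-/

open scoped InnerProductSpace
open ContinuousLinearMap

section Contraction

variable {𝕜 E H : Type*} [RCLike 𝕜]
  [NormedAddCommGroup E] [InnerProductSpace 𝕜 E] [CompleteSpace E]
  [NormedAddCommGroup H] [InnerProductSpace 𝕜 H] [CompleteSpace H]

theorem ContinuousLinearMap.adjoint_apply_apply_of_norm_apply_eq {A : E →L[𝕜] H} (hA : ‖A‖ ≤ 1)
    {x : E} (hx : ‖A x‖ = ‖x‖) : adjoint A (A x) = x := by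
  have hinner : ⟪adjoint A (A x), x⟫_𝕜 = (‖x‖ : 𝕜) ^ 2 := by
    rw [adjoint_inner_left, inner_self_eq_norm_sq_to_K, hx]
  have hA' : ‖adjoint A‖ ≤ 1 := by rwa [adjoint.norm_map]
  have hle : ‖adjoint A (A x)‖ ≤ ‖x‖ := by
    simpa [hx] using (adjoint A).le_of_opNorm_le hA' (A x)
  have hsq : ‖adjoint A (A x) - x‖ ^ 2 ≤ 0 := by
    rw [@norm_sub_sq 𝕜, hinner, ← RCLike.ofReal_pow, RCLike.ofReal_re]
    nlinarith [norm_nonneg (adjoint A (A x))]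
  rw [← sub_eq_zero, ← norm_le_zero_iff]
  nlinarith [norm_nonneg (adjoint A (A x) - x)]

theorem ContinuousLinearMap.apply_eq_zero_iff_norm_apply_eq {A : E →L[𝕜] H} {D : E →L[𝕜] E}
    (hD : IsSelfAdjoint D) (hDA : D ∘L D = 1 - adjoint A ∘L A) (x : E) :
    D x = 0 ↔ ‖A x‖ = ‖x‖ := by
  have hnorm : ‖D x‖ ^ 2 = ‖x‖ ^ 2 - ‖A x‖ ^ 2 := by
    have h := congr(⟪$hDA x, x⟫_𝕜)
    simp only [comp_apply, sub_apply, one_apply_eq_self, inner_sub_left,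
      adjoint_inner_left] at h
    rw [← inner_self_eq_norm_sq (𝕜 := 𝕜), ← adjoint_inner_left, hD.adjoint_eq, h, map_sub,
      inner_self_eq_norm_sq, inner_self_eq_norm_sq]
  rw [← norm_eq_zero, ← sq_eq_zero_iff, hnorm, sub_eq_zero, eq_comm,
    sq_eq_sq₀ (norm_nonneg _) (norm_nonneg _)]

theorem ContinuousLinearMap.re_inner_sum_apply_adjoint_apply {ι : Type*} [Fintype ι]
    (T : ι → H →L[𝕜] H) (v : H) :
    RCLike.re ⟪∑ i, T i (adjoint (T i) v), v⟫_𝕜 = ∑ i, ‖adjoint (T i) v‖ ^ 2 := by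
  rw [sum_inner, map_sum]
  refine Finset.sum_congr rfl fun i _ => ?_
  rw [← adjoint_inner_right, inner_self_eq_norm_sq]

theorem ContinuousLinearMap.IsPositive.sum_norm_adjoint_apply_sq_le {ι : Type*} [Fintype ι]
    {T : ι → H →L[𝕜] H} (hT : (1 - ∑ i, T i ∘L adjoint (T i)).IsPositive) (v : H) :
    ∑ i, ‖adjoint (T i) v‖ ^ 2 ≤ ‖v‖ ^ 2 := by
  have h := hT.re_inner_nonneg_left v
  simp only [sub_apply, one_apply_eq_self, sum_apply, comp_apply, inner_sub_left,
    map_sub, re_inner_sum_apply_adjoint_apply, inner_self_eq_norm_sq] at h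
  linarith

theorem ContinuousLinearMap.norm_apply_adjoint_apply_eq_of_intertwining {ι : Type*} [Fintype ι]
    {A : E →L[𝕜] H} (hA : ‖A‖ ≤ 1) {S : ι → E →L[𝕜] E} {T : ι → H →L[𝕜] H}
    (hT : ∀ v, ∑ i, ‖adjoint (T i) v‖ ^ 2 ≤ ‖v‖ ^ 2) (hAS : ∀ i, A ∘L S i = T i ∘L A)
    {g : E} (hg : ‖A g‖ = ‖g‖) (hgS : ‖g‖ ^ 2 = ∑ i, ‖adjoint (S i) g‖ ^ 2) (i : ι) :
    ‖A (adjoint (S i) g)‖ = ‖adjoint (S i) g‖ := by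
  have hA' : ‖adjoint A‖ ≤ 1 := by rwa [adjoint.norm_map]
  have hSg : ∀ i, adjoint (S i) g = adjoint A (adjoint (T i) (A g)) := by
    intro i
    conv_lhs => rw [← adjoint_apply_apply_of_norm_apply_eq hA hg]
    simpa [adjoint_comp] using congr(adjoint $(hAS i) (A g))
  have hle : ∀ i ∈ Finset.univ, ‖adjoint (S i) g‖ ^ 2 ≤ ‖adjoint (T i) (A g)‖ ^ 2 := by
    intro i _
    rw [hSg i]
    gcongr
    simpa using (adjoint A).le_of_opNorm_le hA' _
  -- `∑ ‖S i† g‖² ≤ ∑ ‖T i† (A g)‖² ≤ ‖A g‖² = ‖g‖²` closes up, so each term is an equality.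
  have hsum : ∑ i, ‖adjoint (S i) g‖ ^ 2 = ∑ i, ‖adjoint (T i) (A g)‖ ^ 2 :=
    le_antisymm (Finset.sum_le_sum hle) (by rw [← hgS, ← hg]; exact hT _)
  have hv : ‖adjoint A (adjoint (T i) (A g))‖ = ‖adjoint (T i) (A g)‖ := by
    rw [← hSg i, ← sq_eq_sq₀ (norm_nonneg _) (norm_nonneg _)]
    exact (Finset.sum_eq_sum_iff_of_le hle).mp hsum i (Finset.mem_univ i)
  have hAv := adjoint_apply_apply_of_norm_apply_eq hA' hv
  rw [adjoint_adjoint] at hAv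
  rw [hSg i, hAv, hv]

theorem IsSelfAdjoint.eq_zero_of_mem_closure_range {D : E →L[𝕜] E} (hD : IsSelfAdjoint D)
    {y : E} (hy : y ∈ (LinearMap.range (D : E →ₗ[𝕜] E)).topologicalClosure) (hDy : D y = 0) :
    y = 0 := by
  set K := LinearMap.range (D : E →ₗ[𝕜] E)
  have hyK : y ∈ Kᗮ := by rw [orthogonal_range, hD.adjoint_eq]; exact hDy
  rw [← K.orthogonal_orthogonal_eq_closure] at hy
  have hbot : y ∈ Kᗮ ⊓ Kᗮᗮ := ⟨hyK, hy⟩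
  rwa [Kᗮ.inf_orthogonal_eq_bot, Submodule.mem_bot] at hbot

end Contraction

/-- Abstract model of the full Fock space `F²(Hₙ)`: `S i` are the left creation operators,
`Sw w = S w₁ ∘ ⋯ ∘ S wₖ` their words and `Ω` the vacuum. -/
structure IsFockModel {𝕜 E ι : Type*} [RCLike 𝕜]
    [NormedAddCommGroup E] [InnerProductSpace 𝕜 E] [CompleteSpace E]
    (S : ι → E →L[𝕜] E) (Sw : List ι → E →L[𝕜] E) (Ω : E) : Prop where
  norm_apply : ∀ i x, ‖S i x‖ = ‖x‖
  adjoint_comp_of_ne : ∀ i j, i ≠ j → adjoint (S i) ∘L S j = 0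
  word_nil : Sw [] = 1
  word_cons : ∀ i w, Sw (i :: w) = S i ∘L Sw w
  norm_vacuum : ‖Ω‖ = 1
  adjoint_vacuum : ∀ i, adjoint (S i) Ω = 0
  span_words_dense : (Submodule.span 𝕜 (Set.range fun w => Sw w Ω)).topologicalClosure = ⊤

namespace IsFockModel

variable {𝕜 E ι : Type*} [RCLike 𝕜]
  [NormedAddCommGroup E] [InnerProductSpace 𝕜 E] [CompleteSpace E]
  {S : ι → E →L[𝕜] E} {Sw : List ι → E →L[𝕜] E} {Ω : E}

theorem adjoint_apply_apply_self (hF : IsFockModel S Sw Ω) (i : ι) (x : E) :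
    adjoint (S i) (S i x) = x :=
  congr($((norm_map_iff_adjoint_comp_self _).mp (hF.norm_apply i)) x)

theorem adjoint_apply_apply_of_ne (hF : IsFockModel S Sw Ω) {i j : ι} (hij : i ≠ j) (x : E) :
    adjoint (S i) (S j x) = 0 :=
  congr($(hF.adjoint_comp_of_ne i j hij) x)

theorem eq_zero_of_forall_inner_word_eq_zero (hF : IsFockModel S Sw Ω) {x : E}
    (hx : ∀ w, ⟪Sw w Ω, x⟫_𝕜 = 0) : x = 0 := by
  have hdense := Submodule.dense_iff_topologicalClosure_eq_top.mpr hF.span_words_dense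
  have h : innerSL 𝕜 x = 0 := ext_on hdense <| by
    rintro _ ⟨w, rfl⟩
    simp [← inner_conj_symm x, hx w]
  simpa using congr($h x)

theorem sum_apply_adjoint_apply_add_inner_smul [Fintype ι]
    (hF : IsFockModel S Sw Ω) (x : E) :
    ∑ i, S i (adjoint (S i) x) + ⟪Ω, x⟫_𝕜 • Ω = x := by
  suffices h : ∑ i, S i ∘L adjoint (S i) + (innerSL 𝕜 Ω).smulRight Ω = 1 by
    simpa using congr($h x)
  refine ext_on (Submodule.dense_iff_topologicalClosure_eq_top.mpr hF.span_words_dense) ?_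
  rintro _ ⟨_ | ⟨i, w⟩, rfl⟩
  · simp [hF.word_nil, hF.adjoint_vacuum, inner_self_eq_norm_sq_to_K, hF.norm_vacuum]
  · have hvac : ⟪Ω, S i (Sw w Ω)⟫_𝕜 = 0 := by
      rw [← adjoint_inner_left, hF.adjoint_vacuum, inner_zero_left]
    have hsum : ∑ j, S j (adjoint (S j) (S i (Sw w Ω))) = S i (Sw w Ω) := by
      rw [Finset.sum_eq_single i
        (fun j _ hji => by rw [hF.adjoint_apply_apply_of_ne hji, map_zero]) (by simp),
        hF.adjoint_apply_apply_self]
    simp [hF.word_cons, hvac, hsum]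

theorem norm_sq_eq_sum_of_inner_eq_zero [Fintype ι] (hF : IsFockModel S Sw Ω) {x : E}
    (hx : ⟪Ω, x⟫_𝕜 = 0) : ‖x‖ ^ 2 = ∑ i, ‖adjoint (S i) x‖ ^ 2 := by
  have hx' := hF.sum_apply_adjoint_apply_add_inner_smul x
  rw [hx, zero_smul, add_zero] at hx'
  rw [← re_inner_sum_apply_adjoint_apply, hx', inner_self_eq_norm_sq]

theorem eq_inner_smul_of_forall_adjoint_eq_zero [Fintype ι] (hF : IsFockModel S Sw Ω) {x : E}
    (hx : ∀ i, adjoint (S i) x = 0) : x = ⟪Ω, x⟫_𝕜 • Ω := by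
  simpa [hx] using (hF.sum_apply_adjoint_apply_add_inner_smul x).symm

theorem exists_mem_inner_ne_zero (hF : IsFockModel S Sw Ω) (P : Set E)
    (hP : ∀ g ∈ P, ⟪Ω, g⟫_𝕜 = 0 → ∀ i, adjoint (S i) g ∈ P) {h : E} (hh : h ∈ P) (h0 : h ≠ 0) :
    ∃ g ∈ P, ⟪Ω, g⟫_𝕜 ≠ 0 := by
  -- Otherwise `P` is invariant under every `Sw w†`, so `h` is orthogonal to every `Sw w Ω`.
  by_contra! hvac
  have hword : ∀ w, ∀ g ∈ P, adjoint (Sw w) g ∈ P := by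
    intro w
    induction w with
    | nil => intro g hg; rwa [hF.word_nil, adjoint_one, one_apply_eq_self]
    | cons i w ih =>
      intro g hg
      rw [hF.word_cons, adjoint_comp, comp_apply]
      exact ih _ (hP g hg (hvac g hg) i)
  exact h0 <| hF.eq_zero_of_forall_inner_word_eq_zero fun w =>
    (adjoint_inner_right _ _ _).symm.trans (hvac _ (hword w h hh))

theorem eq_zero_of_mem_closure_range_of_inner_eq_zero [Fintype ι] (hF : IsFockModel S Sw Ω)
    {D : E →L[𝕜] E} (hD : IsSelfAdjoint D) {f : E} (hDf : D f = 0) (hfΩ : ⟪Ω, f⟫_𝕜 ≠ 0) {y : E}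
    (hy : y ∈ (LinearMap.range (D : E →ₗ[𝕜] E)).topologicalClosure)
    (hyS : ∀ i x, ⟪D (S i x), y⟫_𝕜 = 0) : y = 0 := by
  have hSDy : ∀ i, adjoint (S i) (D y) = 0 := fun i => ext_inner_left 𝕜 fun x => by
    rw [adjoint_inner_right, ← adjoint_inner_left, hD.adjoint_eq, hyS, inner_zero_right]
  have hDy := hF.eq_inner_smul_of_forall_adjoint_eq_zero hSDy
  have hDyf : ⟪D y, f⟫_𝕜 = 0 := by
    rw [← adjoint_inner_right, hD.adjoint_eq, hDf, inner_zero_right]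
  rw [hDy, inner_smul_left, mul_eq_zero, map_eq_zero] at hDyf
  refine hD.eq_zero_of_mem_closure_range hy ?_
  rw [hDy, hDyf.resolve_right hfΩ, zero_smul]

end IsFockModel

/-- Let `F` be a model of the full Fock space `F²(Hₙ)` (creation operators
`S_i`, vacuum `Ω` with cyclic translates), `T' = [T_1' ⋯ T_n']` a row contraction on `H'`,
and `A : F → H'` a contraction of norm one that attains its norm and satisfies
`A S_i = T_i' A`.  Then `M := closure(D_A F) ⊖ ⋁_i D_A S_i F = {0}` (every vector of
`closure(range D_A)` orthogonal to all `D_A S_i x` vanishes), and `A` attains its norm at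
some `f` with `f(0) = ⟨Ω, f⟩ ≠ 0`. -/
theorem stmt_15 {F H' : Type*}
    [NormedAddCommGroup F] [InnerProductSpace ℂ F] [CompleteSpace F]
    [NormedAddCommGroup H'] [InnerProductSpace ℂ H'] [CompleteSpace H']
    {n : ℕ} (S : Fin n → F →L[ℂ] F)
    (hSiso : ∀ i (x : F), ‖S i x‖ = ‖x‖)
    (hSorth : ∀ i j, i ≠ j → ContinuousLinearMap.adjoint (S i) ∘L S j = 0)
    (Sw : List (Fin n) → F →L[ℂ] F) (hSw_nil : Sw [] = 1)
    (hSw_cons : ∀ i w, Sw (i :: w) = S i ∘L Sw w)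
    (Ω : F) (hΩ : ‖Ω‖ = 1) (hSΩ : ∀ i, ContinuousLinearMap.adjoint (S i) Ω = 0)
    (hspan : (Submodule.span ℂ
        (Set.range fun w : List (Fin n) => Sw w Ω)).topologicalClosure = ⊤)
    (T' : Fin n → H' →L[ℂ] H')
    (hrow : ((1 : H' →L[ℂ] H')
        - ∑ i, T' i ∘L ContinuousLinearMap.adjoint (T' i)).IsPositive)
    (A : F →L[ℂ] H') (hAnorm : ‖A‖ = 1)
    (hattain : ∃ h : F, ‖h‖ = 1 ∧ ‖A h‖ = 1)
    (hint : ∀ i, A ∘L S i = T' i ∘L A)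
    (DA : F →L[ℂ] F) (hDApos : DA.IsPositive)
    (hDA : DA ∘L DA = 1 - ContinuousLinearMap.adjoint A ∘L A) :
    (∀ y : F, y ∈ (LinearMap.range (DA : F →ₗ[ℂ] F)).topologicalClosure →
        (∀ i (x : F), ⟪DA (S i x), y⟫_ℂ = (0 : ℂ)) → y = 0) ∧
    ∃ f : F, ‖f‖ = 1 ∧ ‖A f‖ = 1 ∧ ⟪Ω, f⟫_ℂ ≠ (0 : ℂ) := by
  have hF : IsFockModel S Sw Ω := ⟨hSiso, hSorth, hSw_nil, hSw_cons, hΩ, hSΩ, hspan⟩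
  obtain ⟨h, hh1, hAh⟩ := hattain
  obtain ⟨g, hAg : ‖A g‖ = ‖g‖, hgΩ⟩ := hF.exists_mem_inner_ne_zero {g | ‖A g‖ = ‖g‖}
    (fun g hAg hgΩ => norm_apply_adjoint_apply_eq_of_intertwining hAnorm.le
      hrow.sum_norm_adjoint_apply_sq_le hint hAg (hF.norm_sq_eq_sum_of_inner_eq_zero hgΩ))
    (hAh.trans hh1.symm) (norm_ne_zero_iff.mp (hh1 ▸ one_ne_zero))
  have hg0 : g ≠ 0 := fun hg => hgΩ (by rw [hg, inner_zero_right])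
  set f := (‖g‖ : ℂ)⁻¹ • g
  have hf1 : ‖f‖ = 1 := norm_smul_inv_norm hg0
  have hAf : ‖A f‖ = ‖f‖ := by simp only [f, map_smul, norm_smul, hAg]
  have hfΩ : ⟪Ω, f⟫_ℂ ≠ 0 := by simp [f, hgΩ, hg0]
  have hDf : DA f = 0 := (apply_eq_zero_iff_norm_apply_eq hDApos.isSelfAdjoint hDA f).mpr hAf
  refine ⟨fun y hy hyS => ?_, f, hf1, hAf.trans hf1, hfΩ⟩
  exact hF.eq_zero_of_mem_closure_range_of_inner_eq_zero hDApos.isSelfAdjoint hDf hfΩ hy hyS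
end

section
/- Let Z_1,…,Z_n ∈ B(Y) with r(Z) < 1, where r(Z) is the joint spectral radius defined by r(Z) = lim_k ‖∑_{|α|=k} Z_α Z_α*‖^{1/(2k)}. Then for each k, ‖(S_1 ⊗ Z_1* + ⋯ + S_n ⊗ Z_n*)^k‖ = ‖∑_{|α|=k} Z_α Z_α*‖^{1/2}, the series ∑_{k≥0} (S_1 ⊗ Z_1* + ⋯ + S_n ⊗ Z_n*)^k converges absolutely in operator norm, and (I − S_1 ⊗ Z_1* − ⋯ − S_n ⊗ Z_n*)^{-1} = ∑_{k=0}^∞ ∑_{|α|=k} S_α ⊗ Z_{α̃}*, where α̃ denotes the reverse of the word α. -/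
private lemma stmt18_ofFn_rev {α : Type*} {k : ℕ} (w : Fin k → α) :
    List.ofFn (fun i => w i.rev) = (List.ofFn w).reverse := by
  apply List.ext_getElem (by simp)
  intro i h1 h2
  simp only [List.length_ofFn] at h1
  simp [List.getElem_reverse, Fin.rev]
  congr 1
  simp only [Fin.mk.injEq]
  omega

set_option maxHeartbeats 1000000 in
/-- Let `Z_1,…,Z_n ∈ B(Y)` with joint spectral radius `r(Z) < 1`, and model
the ampliated operators on `F²(Hₙ) ⊗ Y` by a Hilbert space `G` carrying isometries `𝕊_i`
with orthogonal ranges (the `S_i ⊗ I`) and an isometric unital ⋆-homomorphism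
`ι : B(Y) → B(G)` (the map `A ↦ I ⊗ A`) whose range commutes with the `𝕊_i`.  Put
`D := ∑ 𝕊_i ι(Z_i*)` (i.e. `S_1 ⊗ Z_1* + ⋯ + S_n ⊗ Z_n*`).  Then for every `k`,
`‖D^k‖ = ‖∑_{|α|=k} Z_α Z_α*‖^{1/2}`, the series `∑_k D^k` converges absolutely in
operator norm, and `(I − D)⁻¹ = ∑_k ∑_{|α|=k} 𝕊_α ι(Z_{α̃}*)`. -/
theorem stmt_18 {Y G : Type*}
    [NormedAddCommGroup Y] [InnerProductSpace ℂ Y] [CompleteSpace Y]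
    [NormedAddCommGroup G] [InnerProductSpace ℂ G] [CompleteSpace G]
    {n : ℕ} (Z : Fin n → Y →L[ℂ] Y)
    (Zw : List (Fin n) → Y →L[ℂ] Y) (hZw_nil : Zw [] = 1)
    (hZw_cons : ∀ i w, Zw (i :: w) = Z i ∘L Zw w)
    (L : ℝ) (hL : L < 1)
    (hlim : Filter.Tendsto
      (fun k : ℕ => ‖∑ w : Fin k → Fin n,
          Zw (List.ofFn w) ∘L ContinuousLinearMap.adjoint (Zw (List.ofFn w))‖
        ^ ((1 : ℝ) / (2 * (k : ℝ))))
      Filter.atTop (nhds L))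
    (𝕊 : Fin n → G →L[ℂ] G)
    (h𝕊iso : ∀ i (x : G), ‖𝕊 i x‖ = ‖x‖)
    (h𝕊orth : ∀ i j, i ≠ j → ContinuousLinearMap.adjoint (𝕊 i) ∘L 𝕊 j = 0)
    (𝕊w : List (Fin n) → G →L[ℂ] G) (h𝕊w_nil : 𝕊w [] = 1)
    (h𝕊w_cons : ∀ i w, 𝕊w (i :: w) = 𝕊 i ∘L 𝕊w w)
    (ι : (Y →L[ℂ] Y) →⋆ₐ[ℂ] (G →L[ℂ] G))
    (hιiso : ∀ A : Y →L[ℂ] Y, ‖ι A‖ = ‖A‖)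
    (hιcomm : ∀ (A : Y →L[ℂ] Y) (i : Fin n), ι A ∘L 𝕊 i = 𝕊 i ∘L ι A) :
    (∀ k : ℕ, ‖(∑ i, 𝕊 i ∘L ι (ContinuousLinearMap.adjoint (Z i))) ^ k‖
        = Real.sqrt ‖∑ w : Fin k → Fin n,
            Zw (List.ofFn w) ∘L ContinuousLinearMap.adjoint (Zw (List.ofFn w))‖) ∧
    Summable (fun k : ℕ =>
      ‖(∑ i, 𝕊 i ∘L ι (ContinuousLinearMap.adjoint (Z i))) ^ k‖) ∧
    ∃ Dinv : G →L[ℂ] G,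
      HasSum (fun k : ℕ =>
        (∑ i, 𝕊 i ∘L ι (ContinuousLinearMap.adjoint (Z i))) ^ k) Dinv ∧
      (1 - ∑ i, 𝕊 i ∘L ι (ContinuousLinearMap.adjoint (Z i))) ∘L Dinv = 1 ∧
      Dinv ∘L (1 - ∑ i, 𝕊 i ∘L ι (ContinuousLinearMap.adjoint (Z i))) = 1 ∧
      HasSum (fun k : ℕ => ∑ w : Fin k → Fin n,
        𝕊w (List.ofFn w) ∘L
          ι (ContinuousLinearMap.adjoint (Zw (List.ofFn w).reverse))) Dinv := by
  classical
  simp only [← ContinuousLinearMap.star_eq_adjoint, ← ContinuousLinearMap.mul_def]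
  simp only [← ContinuousLinearMap.star_eq_adjoint, ← ContinuousLinearMap.mul_def] at hlim
  have hZw_cons' : ∀ i w, Zw (i :: w) = Z i * Zw w := hZw_cons
  have h𝕊w_cons' : ∀ i w, 𝕊w (i :: w) = 𝕊 i * 𝕊w w := h𝕊w_cons
  have hιcomm' : ∀ (A : Y →L[ℂ] Y) (i : Fin n), ι A * 𝕊 i = 𝕊 i * ι A := hιcomm
  have h𝕊orth' : ∀ i j, i ≠ j → star (𝕊 i) * 𝕊 j = 0 := fun i j h => by
    have := h𝕊orth i j h
    rw [ContinuousLinearMap.star_eq_adjoint, ContinuousLinearMap.mul_def]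
    exact this
  set D : G →L[ℂ] G := ∑ i, 𝕊 i * ι (star (Z i)) with hDdef
  have hiso : ∀ i, star (𝕊 i) * 𝕊 i = 1 := fun i => by
    rw [ContinuousLinearMap.star_eq_adjoint, ContinuousLinearMap.mul_def]
    exact (ContinuousLinearMap.norm_map_iff_adjoint_comp_self (𝕊 i)).mp (h𝕊iso i)
  -- Zw on appended words
  have hZw_app : ∀ u v, Zw (u ++ v) = Zw u * Zw v := by
    intro u
    induction u with
    | nil => intro v; simp [hZw_nil]
    | cons i u ih =>
      intro v
      rw [List.cons_append, hZw_cons', hZw_cons', ih, mul_assoc]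
  -- ι commutes with 𝕊w
  have hcommw : ∀ (A : Y →L[ℂ] Y) (u : List (Fin n)), ι A * 𝕊w u = 𝕊w u * ι A := by
    intro A u
    induction u with
    | nil => simp [h𝕊w_nil]
    | cons i u ih =>
      rw [h𝕊w_cons', ← mul_assoc, hιcomm' A i, mul_assoc, ih, mul_assoc]
  -- orthogonality of words of equal length
  have hword : ∀ u v : List (Fin n), u.length = v.length →
      star (𝕊w u) * 𝕊w v = if u = v then 1 else 0 := by
    intro u
    induction u with
    | nil =>
      intro v hv
      obtain rfl : v = [] := by cases v <;> simp_all
      simp [h𝕊w_nil]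
    | cons i u ih =>
      intro v hv
      cases v with
      | nil => simp at hv
      | cons j v' =>
        simp only [List.length_cons, Nat.add_right_cancel_iff] at hv
        rw [h𝕊w_cons', h𝕊w_cons', star_mul, mul_assoc, ← mul_assoc (star (𝕊 i))]
        by_cases hij : i = j
        · subst hij
          rw [hiso, one_mul, ih v' hv]
          by_cases huv : u = v' <;> simp [huv]
        · rw [h𝕊orth' i j hij]
          simp [List.cons_eq_cons, hij]
  -- the word expansion of D ^ k
  have hDk : ∀ k : ℕ, D ^ k
      = ∑ w : Fin k → Fin n, 𝕊w (List.ofFn w) * ι (star (Zw (List.ofFn w).reverse)) := by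
    intro k
    induction k with
    | zero =>
      rw [pow_zero]
      rw [Fintype.sum_unique]
      simp [h𝕊w_nil, hZw_nil]
    | succ k ih =>
      have hterm : ∀ (i : Fin n) (u : List (Fin n)),
          (𝕊 i * ι (star (Z i))) * (𝕊w u * ι (star (Zw u.reverse)))
            = 𝕊w (i :: u) * ι (star (Zw (i :: u).reverse)) := by
        intro i u
        have h2 : star (Z i) * star (Zw u.reverse) = star (Zw ((i :: u).reverse)) := by
          rw [List.reverse_cons, hZw_app, ← star_mul]
          congr 1
          rw [hZw_cons', hZw_nil, mul_one]
        rw [mul_assoc, ← mul_assoc (ι (star (Z i))), hcommw, mul_assoc (𝕊w u),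
          ← map_mul, h2, ← mul_assoc, ← h𝕊w_cons']
      rw [pow_succ', ih, hDdef, Finset.sum_mul_sum]
      rw [← Equiv.sum_comp (Fin.consEquiv (fun _ => Fin n))
        (fun w : Fin (k+1) → Fin n => 𝕊w (List.ofFn w) * ι (star (Zw (List.ofFn w).reverse))),
        Fintype.sum_prod_type]
      refine Finset.sum_congr rfl fun i _ => Finset.sum_congr rfl fun w _ => ?_
      have hcons : List.ofFn (Fin.consEquiv (fun _ => Fin n) (i, w)) = i :: List.ofFn w := by
        simp [Fin.consEquiv, List.ofFn_succ]
      rw [hcons, hterm]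
  -- the norm of D ^ k
  set P : ℕ → (Y →L[ℂ] Y) :=
    fun k => ∑ w : Fin k → Fin n, Zw (List.ofFn w) * star (Zw (List.ofFn w)) with hPdef
  have hnorm : ∀ k : ℕ, ‖D ^ k‖ = Real.sqrt ‖P k‖ := by
    intro k
    have hstar : star (D ^ k) * D ^ k = ι (P k) := by
      rw [hDk k, star_sum, Finset.sum_mul_sum]
      have hterm2 : ∀ u v : Fin k → Fin n,
          star (𝕊w (List.ofFn u) * ι (star (Zw (List.ofFn u).reverse)))
            * (𝕊w (List.ofFn v) * ι (star (Zw (List.ofFn v).reverse)))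
          = if u = v then
              ι (Zw (List.ofFn u).reverse * star (Zw (List.ofFn u).reverse)) else 0 := by
        intro u v
        have hl : (List.ofFn u).length = (List.ofFn v).length := by simp
        rw [star_mul, ← map_star, star_star, mul_assoc,
          ← mul_assoc (star (𝕊w (List.ofFn u))), hword _ _ hl]
        by_cases huv : u = v
        · subst huv
          simp [← map_mul]
        · have hne : List.ofFn u ≠ List.ofFn v := by
            simpa [List.ofFn_inj] using huv
          simp [hne, huv]
      have hcollapse : (∑ u : Fin k → Fin n, ∑ v : Fin k → Fin n,
          star (𝕊w (List.ofFn u) * ι (star (Zw (List.ofFn u).reverse)))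
            * (𝕊w (List.ofFn v) * ι (star (Zw (List.ofFn v).reverse))))
          = ∑ u : Fin k → Fin n,
              ι (Zw (List.ofFn u).reverse * star (Zw (List.ofFn u).reverse)) := by
        refine Finset.sum_congr rfl fun u _ => ?_
        rw [Finset.sum_congr rfl fun v _ => hterm2 u v]
        simp
      rw [hcollapse, ← map_sum]
      congr 1
      exact Fintype.sum_bijective (fun w : Fin k → Fin n => fun i => w i.rev)
        (Function.Involutive.bijective (fun w => funext fun i => by simp))
        _ _ (fun w => by rw [stmt18_ofFn_rev])
    have h2 : ‖D ^ k‖ * ‖D ^ k‖ = ‖P k‖ := by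
      rw [← CStarRing.norm_star_mul_self, hstar, hιiso]
    rw [← h2, Real.sqrt_mul_self (norm_nonneg _)]
  -- summability
  have hlim' : Filter.Tendsto (fun k : ℕ => ‖P k‖ ^ ((1 : ℝ)/(2 * (k : ℝ))))
      Filter.atTop (nhds L) := hlim
  have hL0 : 0 ≤ L := ge_of_tendsto' hlim' (fun k => Real.rpow_nonneg (norm_nonneg _) _)
  set r : ℝ := (L + 1) / 2 with hrdef
  have hr0 : 0 ≤ r := by rw [hrdef]; linarith
  have hr1 : r < 1 := by rw [hrdef]; linarith
  have hLr : L < r := by rw [hrdef]; linarith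
  obtain ⟨N, hN⟩ := Filter.eventually_atTop.mp (hlim'.eventually_lt_const hLr)
  have key : ∀ k, N ≤ k → 1 ≤ k → ‖D ^ k‖ ≤ r ^ k := by
    intro k hk hk1
    have hb := hN k hk
    have hx : (0 : ℝ) ≤ ‖P k‖ := norm_nonneg _
    have heq : Real.sqrt ‖P k‖ = (‖P k‖ ^ ((1 : ℝ)/(2 * (k : ℝ)))) ^ k := by
      rw [← Real.rpow_natCast (‖P k‖ ^ ((1 : ℝ)/(2 * (k : ℝ)))) k, ← Real.rpow_mul hx,
        Real.sqrt_eq_rpow]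
      congr 1
      have hk0 : (k : ℝ) ≠ 0 := Nat.cast_ne_zero.mpr (by omega)
      field_simp
    rw [hnorm k, heq]
    exact pow_le_pow_left₀ (Real.rpow_nonneg hx _) hb.le k
  have hsummable : Summable (fun k : ℕ => ‖D ^ k‖) := by
    rw [← summable_nat_add_iff (max N 1)]
    apply Summable.of_nonneg_of_le (fun k => norm_nonneg _)
      (fun k => key (k + max N 1) (by omega) (by omega))
    simp only [pow_add]
    exact (summable_geometric_of_lt_one hr0 hr1).mul_right _
  have hsD : Summable (fun k : ℕ => D ^ k) := Summable.of_norm hsummable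
  obtain ⟨Dinv, hDinv⟩ := hsD
  have htend0 : Filter.Tendsto (fun k : ℕ => D ^ k) Filter.atTop (nhds 0) :=
    hDinv.summable.tendsto_atTop_zero
  have hpart : Filter.Tendsto (fun N => ∑ k ∈ Finset.range N, D ^ k)
      Filter.atTop (nhds Dinv) := hDinv.tendsto_sum_nat
  refine ⟨hnorm, hsummable, Dinv, hDinv, ?_, ?_, ?_⟩
  · have h1 : Filter.Tendsto (fun N => (1 - D) * ∑ k ∈ Finset.range N, D ^ k)
        Filter.atTop (nhds ((1 - D) * Dinv)) := hpart.const_mul _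
    have h2 : (fun N => (1 - D) * ∑ k ∈ Finset.range N, D ^ k)
        = fun N : ℕ => 1 - D ^ N := by
      funext N
      have h3 : (1 - D) * ∑ k ∈ Finset.range N, D ^ k
          = -((D - 1) * ∑ k ∈ Finset.range N, D ^ k) := by rw [← neg_sub, neg_mul]
      rw [h3, mul_geom_sum, neg_sub]
    rw [h2] at h1
    have h4 : Filter.Tendsto (fun N : ℕ => 1 - D ^ N) Filter.atTop (nhds (1 - 0)) :=
      tendsto_const_nhds.sub htend0
    have h5 := tendsto_nhds_unique h1 h4
    rw [sub_zero] at h5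
    exact h5
  · have h1 : Filter.Tendsto (fun N => (∑ k ∈ Finset.range N, D ^ k) * (1 - D))
        Filter.atTop (nhds (Dinv * (1 - D))) := hpart.mul_const _
    have h2 : (fun N => (∑ k ∈ Finset.range N, D ^ k) * (1 - D))
        = fun N : ℕ => 1 - D ^ N := by
      funext N
      have h3 : (∑ k ∈ Finset.range N, D ^ k) * (1 - D)
          = -((∑ k ∈ Finset.range N, D ^ k) * (D - 1)) := by rw [← neg_sub, mul_neg]
      rw [h3, geom_sum_mul, neg_sub]
    rw [h2] at h1
    have h4 : Filter.Tendsto (fun N : ℕ => 1 - D ^ N) Filter.atTop (nhds (1 - 0)) :=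
      tendsto_const_nhds.sub htend0
    have h5 := tendsto_nhds_unique h1 h4
    rw [sub_zero] at h5
    exact h5
  · have h6 : (fun k : ℕ => ∑ w : Fin k → Fin n,
        𝕊w (List.ofFn w) * ι (star (Zw (List.ofFn w).reverse))) = fun k : ℕ => D ^ k :=
      funext fun k => (hDk k).symm
    rw [h6]
    exact hDinv
end
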